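/- On pairs of random variables, the concordance order and the ⋄supermodular order coincide: for 2-dimensional random vectors (X, Y) and (Z, W) in (L^0)², (X, Y) ≤_c (Z, W) if and only if (X, Y) ≤_sm⋄ (Z, W). -/

import Mathlib

open MeasureTheory ProbabilityTheory

/-- A measure is atomless: every set of positive measure has a measurable subset of
strictly smaller positive measure. -/
def Atomless {Ω : Type*} {mΩ : MeasurableSpace Ω} (μ : Measure Ω) : Prop :=
  ∀ s : Set Ω, MeasurableSet s → 0 < μ s →
    ∃ t : Set Ω, MeasurableSet t ∧ t ⊆ s ∧ 0 < μ t ∧ μ t < μ s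

/-- Integral of the positive part, in `ℝ≥0∞`. -/
noncomputable def posPartInt {Ω : Type*} {mΩ : MeasurableSpace Ω} (μ : Measure Ω)
    (Z : Ω → ℝ) : ENNReal :=
  ∫⁻ ω, ENNReal.ofReal (Z ω) ∂μ

/-- The expectation `E[Z] = E[Z₊] - E[Z₋]`, valued in `[-∞, ∞]`. -/
noncomputable def eexp {Ω : Type*} {mΩ : MeasurableSpace Ω} (μ : Measure Ω)
    (Z : Ω → ℝ) : EReal :=
  (posPartInt μ Z : EReal) - (posPartInt μ (fun ω => -Z ω) : EReal)

/-- `E[Z]` is well-defined: `E[Z₊] < ∞` or `E[Z₋] < ∞`. -/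
def WellDef {Ω : Type*} {mΩ : MeasurableSpace Ω} (μ : Measure Ω) (Z : Ω → ℝ) : Prop :=
  posPartInt μ Z ≠ ⊤ ∨ posPartInt μ (fun ω => -Z ω) ≠ ⊤

/-- `E[Z]` is finite: `E[Z₊] < ∞` and `E[Z₋] < ∞`. -/
def FiniteExp {Ω : Type*} {mΩ : MeasurableSpace Ω} (μ : Measure Ω) (Z : Ω → ℝ) : Prop :=
  posPartInt μ Z ≠ ⊤ ∧ posPartInt μ (fun ω => -Z ω) ≠ ⊤

/-- Convex order: `E[u(X)] ≤ E[u(Y)]` for every convex `u` such that both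
expectations are well-defined. -/
def ConvexOrd {Ω : Type*} {mΩ : MeasurableSpace Ω} (μ : Measure Ω) (X Y : Ω → ℝ) : Prop :=
  ∀ u : ℝ → ℝ, ConvexOn ℝ Set.univ u →
    WellDef μ (fun ω => u (X ω)) → WellDef μ (fun ω => u (Y ω)) →
    eexp μ (fun ω => u (X ω)) ≤ eexp μ (fun ω => u (Y ω))

/-- †convex order: `E[u(X)] ≤ E[u(Y)]` for every convex `u` such that both
expectations are finite. -/
def DaggerConvexOrd {Ω : Type*} {mΩ : MeasurableSpace Ω} (μ : Measure Ω) (X Y : Ω → ℝ) : Prop :=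
  ∀ u : ℝ → ℝ, ConvexOn ℝ Set.univ u →
    FiniteExp μ (fun ω => u (X ω)) → FiniteExp μ (fun ω => u (Y ω)) →
    eexp μ (fun ω => u (X ω)) ≤ eexp μ (fun ω => u (Y ω))

/-- `(X, Y)` is comonotonic. -/
def Comonotone {Ω : Type*} {mΩ : MeasurableSpace Ω} (μ : Measure Ω) (X Y : Ω → ℝ) : Prop :=
  ∃ (Z : Ω → ℝ) (f g : ℝ → ℝ), Measurable Z ∧ Monotone f ∧ Monotone g ∧
    X =ᵐ[μ] (fun ω => f (Z ω)) ∧ Y =ᵐ[μ] (fun ω => g (Z ω))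

/-- `(X, Y)` is counter-monotonic: `(X, -Y)` is comonotonic. -/
def CounterMonotone {Ω : Type*} {mΩ : MeasurableSpace Ω} (μ : Measure Ω) (X Y : Ω → ℝ) : Prop :=
  Comonotone μ X (fun ω => -Y ω)


/-- The concordance order on `d`-dimensional random vectors: pointwise ordering of the
joint distribution functions and of the joint survival functions. -/
def ConcOrd {Ω : Type*} {mΩ : MeasurableSpace Ω} (μ : Measure Ω) {d : ℕ}
    (X Y : Fin d → Ω → ℝ) : Prop :=
  (∀ x : Fin d → ℝ, μ {ω | ∀ i, X i ω ≤ x i} ≤ μ {ω | ∀ i, Y i ω ≤ x i}) ∧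
  (∀ x : Fin d → ℝ, μ {ω | ∀ i, x i < X i ω} ≤ μ {ω | ∀ i, x i < Y i ω})

/-- A function `φ : ℝ^d → ℝ` is supermodular if
`φ x + φ y ≤ φ (x ⊓ y) + φ (x ⊔ y)` for all `x, y`. -/
def Supermodular {d : ℕ} (φ : (Fin d → ℝ) → ℝ) : Prop :=
  ∀ x y : Fin d → ℝ, φ x + φ y ≤ φ (x ⊓ y) + φ (x ⊔ y)

/-- The ⋄supermodular order: `E[φ(X)] ≤ E[φ(Y)]` for every bounded, right-continuous
supermodular `φ : ℝ^d → ℝ`. -/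
def SmDiamondOrd {Ω : Type*} {mΩ : MeasurableSpace Ω} (μ : Measure Ω) {d : ℕ}
    (X Y : Fin d → Ω → ℝ) : Prop :=
  ∀ φ : (Fin d → ℝ) → ℝ, Supermodular φ → (∃ C, ∀ x, |φ x| ≤ C) →
    (∀ x : Fin d → ℝ, ContinuousWithinAt φ (Set.Ici x) x) →
    eexp μ (fun ω => φ (fun i => X i ω)) ≤ eexp μ (fun ω => φ (fun i => Y i ω))


section Helpers
open Filter Finset Topology

set_option linter.unusedSectionVars false
set_option linter.unusedVariables false


/-- grid points -/
noncomputable def tt (n k : ℕ) : ℝ := -(n:ℝ) + k / 2^n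
def NN (n : ℕ) : ℕ := 2*n*2^n
noncomputable def idx (n : ℕ) (a : ℝ) : ℕ := min (NN n) ⌈(2^n : ℝ) * (a + n)⌉₊
noncomputable def gg (n : ℕ) (a : ℝ) : ℝ := tt n (idx n a)

lemma tt_mono (n : ℕ) : Monotone (tt n) := by
  intro k l h
  have hkl : (k:ℝ) ≤ l := by exact_mod_cast h
  unfold tt
  have : (k:ℝ)/2^n ≤ (l:ℝ)/2^n := by gcongr
  linarith

lemma idx_le (n : ℕ) (a : ℝ) : idx n a ≤ NN n := min_le_left _ _

lemma tt_lt_iff {n k : ℕ} (hk : k < NN n) (a : ℝ) : tt n k < a ↔ k < idx n a := by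
  have h2 : (0:ℝ) < 2^n := by positivity
  have h3 : tt n k < a ↔ (k:ℝ) < 2^n * (a + n) := by
    unfold tt
    rw [show (2:ℝ)^n * (a + n) = (a + n) * 2^n from mul_comm _ _, ← div_lt_iff₀ h2]
    constructor <;> intro h <;> linarith
  rw [h3, ← Nat.lt_ceil, idx, lt_min_iff]
  constructor
  · intro h; exact ⟨hk, h⟩
  · exact fun h => h.2

lemma gg_bounds {n : ℕ} {a : ℝ} (h1 : -(n:ℝ) ≤ a) (h2 : a ≤ n) :
    a ≤ gg n a ∧ gg n a ≤ a + (2^n : ℝ)⁻¹ := by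
  have hp : (0:ℝ) < 2^n := by positivity
  have hnn : (0:ℝ) ≤ 2^n * (a + n) := by nlinarith
  have hle : ⌈(2^n : ℝ) * (a + n)⌉₊ ≤ NN n := by
    rw [Nat.ceil_le]
    have : ((NN n : ℕ) : ℝ) = 2*n*2^n := by push_cast [NN]; ring
    rw [this]; nlinarith
  have hidx : idx n a = ⌈(2^n : ℝ) * (a + n)⌉₊ := min_eq_right hle
  have hub : (⌈(2^n : ℝ) * (a + n)⌉₊ : ℝ) < 2^n * (a + n) + 1 := Nat.ceil_lt_add_one hnn
  have hlb : (2^n : ℝ) * (a + n) ≤ ⌈(2^n : ℝ) * (a + n)⌉₊ := Nat.le_ceil _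
  have hdiv : (2:ℝ)^n * (a + n) / 2^n = a + n := by field_simp
  constructor
  · unfold gg tt
    rw [hidx]
    have : (2:ℝ)^n * (a + n) / 2^n ≤ (⌈(2^n : ℝ) * (a + n)⌉₊ : ℝ) / 2^n := by gcongr
    rw [hdiv] at this
    linarith
  · unfold gg tt
    rw [hidx]
    have : (⌈(2^n : ℝ) * (a + n)⌉₊ : ℝ) / 2^n ≤ (2^n * (a + n) + 1) / 2^n := by
      gcongr <;> exact hub.le
    rw [add_div, hdiv] at this
    have h1 : (1:ℝ)/2^n = (2^n:ℝ)⁻¹ := one_div _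
    linarith

lemma gg_tendsto (a : ℝ) : Tendsto (fun n => gg n a) atTop (nhds a) := by
  have hev : ∀ᶠ n : ℕ in atTop, a ≤ gg n a ∧ gg n a ≤ a + (2^n : ℝ)⁻¹ := by
    filter_upwards [eventually_ge_atTop ⌈|a|⌉₊] with n hn
    have : |a| ≤ (n:ℝ) := le_trans (Nat.le_ceil _) (by exact_mod_cast hn)
    exact gg_bounds (by cases abs_le.1 this; linarith) (abs_le.1 this).2
  have hup : Tendsto (fun n : ℕ => a + (2^n : ℝ)⁻¹) atTop (nhds a) := by
    have : Tendsto (fun n : ℕ => ((2:ℝ)^n)⁻¹) atTop (nhds 0) := by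
      have := tendsto_pow_atTop_nhds_zero_of_lt_one (by norm_num : (0:ℝ) ≤ 2⁻¹)
        (by norm_num : (2:ℝ)⁻¹ < 1)
      exact this.congr (fun n => by rw [inv_pow])
    simpa using tendsto_const_nhds.add this
  refine tendsto_of_tendsto_of_tendsto_of_le_of_le' tendsto_const_nhds hup ?_ ?_
  · filter_upwards [hev] with n h using h.1
  · filter_upwards [hev] with n h using h.2


lemma gg_ge_eventually (a : ℝ) : ∀ᶠ n : ℕ in atTop, a ≤ gg n a := by
  filter_upwards [eventually_ge_atTop ⌈|a|⌉₊] with n hn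
  have : |a| ≤ (n:ℝ) := le_trans (Nat.le_ceil _) (by exact_mod_cast hn)
  exact (gg_bounds (by cases abs_le.1 this; linarith) (abs_le.1 this).2).1


lemma sum_if_lt (f : ℕ → ℝ) {i N : ℕ} (h : i ≤ N) :
    ∑ k ∈ Finset.range N, (if k < i then f k else 0) = ∑ k ∈ Finset.range i, f k := by
  have : ∀ k, (if k < i then f k else 0) = (if k ∈ Finset.range i then f k else 0) := by
    intro k; simp [Finset.mem_range]
  simp_rw [this]
  rw [Finset.sum_ite_mem, Finset.inter_eq_right.mpr (Finset.range_subset_range.2 h)]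

lemma tele (H : ℕ → ℕ → ℝ) (N i j : ℕ) (hi : i ≤ N) (hj : j ≤ N) :
    H i j = H 0 0
      + (∑ k ∈ Finset.range N, (if k < i then H (k+1) 0 - H k 0 else 0))
      + (∑ l ∈ Finset.range N, (if l < j then H 0 (l+1) - H 0 l else 0))
      + (∑ k ∈ Finset.range N, ∑ l ∈ Finset.range N,
          (if k < i ∧ l < j then
            H (k+1) (l+1) - H (k+1) l - H k (l+1) + H k l else 0)) := by
  rw [sum_if_lt _ hi, sum_if_lt _ hj]
  have hin : ∀ k, ∑ l ∈ Finset.range N, (if k < i ∧ l < j then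
      H (k+1) (l+1) - H (k+1) l - H k (l+1) + H k l else 0)
      = if k < i then (H (k+1) j - H k j) - (H (k+1) 0 - H k 0) else 0 := by
    intro k
    by_cases hk : k < i
    · simp only [hk, true_and]
      rw [sum_if_lt _ hj]
      have : ∀ l, H (k+1) (l+1) - H (k+1) l - H k (l+1) + H k l
          = (fun l => H (k+1) l - H k l) (l+1) - (fun l => H (k+1) l - H k l) l := by
        intro l; simp; ring
      rw [Finset.sum_congr rfl (fun l _ => this l),
        Finset.sum_range_sub (fun l => H (k+1) l - H k l) j]
      simp
    · simp [hk]
  rw [Finset.sum_congr rfl (fun k _ => hin k), sum_if_lt _ hi]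
  have t1 : ∑ k ∈ Finset.range i, (H (k+1) 0 - H k 0) = H i 0 - H 0 0 :=
    Finset.sum_range_sub (fun k => H k 0) i
  have t2 : ∑ l ∈ Finset.range j, (H 0 (l+1) - H 0 l) = H 0 j - H 0 0 :=
    Finset.sum_range_sub (fun l => H 0 l) j
  have t3 : ∑ k ∈ Finset.range i, ((H (k+1) j - H k j) - (H (k+1) 0 - H k 0))
      = (H i j - H i 0) - (H 0 j - H 0 0) := by
    have h := Finset.sum_range_sub (fun k => H k j - H k 0) i
    rw [← h]
    exact Finset.sum_congr rfl (fun k _ => by ring)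
  rw [t1, t2, t3]; ring


lemma approx_eq (ρ : ℝ → ℝ → ℝ) (n : ℕ) (a b : ℝ) :
    ρ (gg n a) (gg n b) = ρ (tt n 0) (tt n 0)
      + (∑ k ∈ Finset.range (NN n),
          (if tt n k < a then ρ (tt n (k+1)) (tt n 0) - ρ (tt n k) (tt n 0) else 0))
      + (∑ l ∈ Finset.range (NN n),
          (if tt n l < b then ρ (tt n 0) (tt n (l+1)) - ρ (tt n 0) (tt n l) else 0))
      + (∑ k ∈ Finset.range (NN n), ∑ l ∈ Finset.range (NN n),
          (if tt n k < a ∧ tt n l < b then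
            ρ (tt n (k+1)) (tt n (l+1)) - ρ (tt n (k+1)) (tt n l)
              - ρ (tt n k) (tt n (l+1)) + ρ (tt n k) (tt n l) else 0)) := by
  rw [show gg n a = tt n (idx n a) from rfl, show gg n b = tt n (idx n b) from rfl]
  rw [tele (fun k l => ρ (tt n k) (tt n l)) (NN n) (idx n a) (idx n b)
    (idx_le n a) (idx_le n b)]
  have e1 : (∑ k ∈ Finset.range (NN n),
      (if k < idx n a then ρ (tt n (k+1)) (tt n 0) - ρ (tt n k) (tt n 0) else 0))
      = ∑ k ∈ Finset.range (NN n),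
      (if tt n k < a then ρ (tt n (k+1)) (tt n 0) - ρ (tt n k) (tt n 0) else 0) :=
    Finset.sum_congr rfl (fun k hk =>
      if_congr (tt_lt_iff (Finset.mem_range.1 hk) a).symm rfl rfl)
  have e2 : (∑ l ∈ Finset.range (NN n),
      (if l < idx n b then ρ (tt n 0) (tt n (l+1)) - ρ (tt n 0) (tt n l) else 0))
      = ∑ l ∈ Finset.range (NN n),
      (if tt n l < b then ρ (tt n 0) (tt n (l+1)) - ρ (tt n 0) (tt n l) else 0) :=
    Finset.sum_congr rfl (fun l hl =>
      if_congr (tt_lt_iff (Finset.mem_range.1 hl) b).symm rfl rfl)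
  have e3 : (∑ k ∈ Finset.range (NN n), ∑ l ∈ Finset.range (NN n),
      (if k < idx n a ∧ l < idx n b then
        ρ (tt n (k+1)) (tt n (l+1)) - ρ (tt n (k+1)) (tt n l)
          - ρ (tt n k) (tt n (l+1)) + ρ (tt n k) (tt n l) else 0))
      = ∑ k ∈ Finset.range (NN n), ∑ l ∈ Finset.range (NN n),
      (if tt n k < a ∧ tt n l < b then
        ρ (tt n (k+1)) (tt n (l+1)) - ρ (tt n (k+1)) (tt n l)
          - ρ (tt n k) (tt n (l+1)) + ρ (tt n k) (tt n l) else 0) :=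
    Finset.sum_congr rfl (fun k hk => Finset.sum_congr rfl (fun l hl =>
      if_congr (and_congr (tt_lt_iff (Finset.mem_range.1 hk) a).symm
        (tt_lt_iff (Finset.mem_range.1 hl) b).symm) rfl rfl))
  rw [e1, e2, e3]

variable {Ω : Type*} [MeasurableSpace Ω] {μ : Measure Ω} [IsProbabilityMeasure μ]

lemma if_eq_indicator {p : Ω → Prop} [∀ ω, Decidable (p ω)] (c : ℝ) :
    (fun ω => if p ω then c else 0) = Set.indicator {ω | p ω} (fun _ => c) := by
  funext ω
  by_cases h : p ω <;> simp [Set.indicator_apply, h]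

lemma integrable_ite {p : Ω → Prop} [∀ ω, Decidable (p ω)]
    (hp : MeasurableSet {ω | p ω}) (c : ℝ) :
    Integrable (fun ω => if p ω then c else 0) μ := by
  rw [if_eq_indicator]
  exact (integrable_const c).indicator hp

lemma integral_ite {p : Ω → Prop} [∀ ω, Decidable (p ω)]
    (hp : MeasurableSet {ω | p ω}) (c : ℝ) :
    ∫ ω, (if p ω then c else 0) ∂μ = (μ {ω | p ω}).toReal * c := by
  rw [if_eq_indicator, integral_indicator_const c hp, smul_eq_mul]
  rfl

section
variable (μ) (ρ : ℝ → ℝ → ℝ) (n : ℕ) {X1 X2 : Ω → ℝ}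

lemma approx_fun_eq (hX1 : Measurable X1) (hX2 : Measurable X2) :
    (fun ω => ρ (gg n (X1 ω)) (gg n (X2 ω)))
    = fun ω => ρ (tt n 0) (tt n 0)
      + (∑ k ∈ Finset.range (NN n),
          (if tt n k < X1 ω then ρ (tt n (k+1)) (tt n 0) - ρ (tt n k) (tt n 0) else 0))
      + (∑ l ∈ Finset.range (NN n),
          (if tt n l < X2 ω then ρ (tt n 0) (tt n (l+1)) - ρ (tt n 0) (tt n l) else 0))
      + (∑ k ∈ Finset.range (NN n), ∑ l ∈ Finset.range (NN n),
          (if tt n k < X1 ω ∧ tt n l < X2 ω then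
            ρ (tt n (k+1)) (tt n (l+1)) - ρ (tt n (k+1)) (tt n l)
              - ρ (tt n k) (tt n (l+1)) + ρ (tt n k) (tt n l) else 0)) :=
  funext fun ω => approx_eq ρ n (X1 ω) (X2 ω)

lemma meas_and (hX1 : Measurable X1) (hX2 : Measurable X2) (s r : ℝ) :
    MeasurableSet {ω | s < X1 ω ∧ r < X2 ω} :=
  (measurableSet_lt measurable_const hX1).inter (measurableSet_lt measurable_const hX2)

lemma integrable_approx (hX1 : Measurable X1) (hX2 : Measurable X2) :
    Integrable (fun ω => ρ (gg n (X1 ω)) (gg n (X2 ω))) μ := by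
  rw [approx_fun_eq ρ n hX1 hX2]
  refine (((integrable_const _).add
    (integrable_finset_sum _ (fun k _ => integrable_ite
      (measurableSet_lt measurable_const hX1) _))).add
    (integrable_finset_sum _ (fun l _ => integrable_ite
      (measurableSet_lt measurable_const hX2) _))).add
    (integrable_finset_sum _ (fun k _ => integrable_finset_sum _ (fun l _ => integrable_ite
      (meas_and hX1 hX2 _ _) _)))

lemma integral_approx (hX1 : Measurable X1) (hX2 : Measurable X2) :
    ∫ ω, ρ (gg n (X1 ω)) (gg n (X2 ω)) ∂μ
    = ρ (tt n 0) (tt n 0)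
      + (∑ k ∈ Finset.range (NN n),
          (μ {ω | tt n k < X1 ω}).toReal * (ρ (tt n (k+1)) (tt n 0) - ρ (tt n k) (tt n 0)))
      + (∑ l ∈ Finset.range (NN n),
          (μ {ω | tt n l < X2 ω}).toReal * (ρ (tt n 0) (tt n (l+1)) - ρ (tt n 0) (tt n l)))
      + (∑ k ∈ Finset.range (NN n), ∑ l ∈ Finset.range (NN n),
          (μ {ω | tt n k < X1 ω ∧ tt n l < X2 ω}).toReal *
            (ρ (tt n (k+1)) (tt n (l+1)) - ρ (tt n (k+1)) (tt n l)
              - ρ (tt n k) (tt n (l+1)) + ρ (tt n k) (tt n l))) := by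
  rw [approx_fun_eq ρ n hX1 hX2]
  have i1 : ∀ k : ℕ, Integrable (fun ω =>
      if tt n k < X1 ω then ρ (tt n (k+1)) (tt n 0) - ρ (tt n k) (tt n 0) else 0) μ :=
    fun k => integrable_ite (measurableSet_lt measurable_const hX1) _
  have i2 : ∀ l : ℕ, Integrable (fun ω =>
      if tt n l < X2 ω then ρ (tt n 0) (tt n (l+1)) - ρ (tt n 0) (tt n l) else 0) μ :=
    fun l => integrable_ite (measurableSet_lt measurable_const hX2) _
  have i3 : ∀ k l : ℕ, Integrable (fun ω =>
      if tt n k < X1 ω ∧ tt n l < X2 ω then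
        ρ (tt n (k+1)) (tt n (l+1)) - ρ (tt n (k+1)) (tt n l)
          - ρ (tt n k) (tt n (l+1)) + ρ (tt n k) (tt n l) else 0) μ :=
    fun k l => integrable_ite (meas_and hX1 hX2 _ _) _
  have I1 : Integrable (fun ω => ∑ k ∈ Finset.range (NN n),
      (if tt n k < X1 ω then ρ (tt n (k+1)) (tt n 0) - ρ (tt n k) (tt n 0) else 0)) μ :=
    integrable_finset_sum _ (fun k _ => i1 k)
  have I2 : Integrable (fun ω => ∑ l ∈ Finset.range (NN n),
      (if tt n l < X2 ω then ρ (tt n 0) (tt n (l+1)) - ρ (tt n 0) (tt n l) else 0)) μ :=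
    integrable_finset_sum _ (fun l _ => i2 l)
  have I3 : Integrable (fun ω => ∑ k ∈ Finset.range (NN n), ∑ l ∈ Finset.range (NN n),
      (if tt n k < X1 ω ∧ tt n l < X2 ω then
        ρ (tt n (k+1)) (tt n (l+1)) - ρ (tt n (k+1)) (tt n l)
          - ρ (tt n k) (tt n (l+1)) + ρ (tt n k) (tt n l) else 0)) μ :=
    integrable_finset_sum _ (fun k _ => integrable_finset_sum _ (fun l _ => i3 k l))
  have I01 : Integrable (fun ω => ρ (tt n 0) (tt n 0)
      + ∑ k ∈ Finset.range (NN n),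
        (if tt n k < X1 ω then ρ (tt n (k+1)) (tt n 0) - ρ (tt n k) (tt n 0) else 0)) μ :=
    (integrable_const _).add I1
  have I012 : Integrable (fun ω => (ρ (tt n 0) (tt n 0)
      + ∑ k ∈ Finset.range (NN n),
        (if tt n k < X1 ω then ρ (tt n (k+1)) (tt n 0) - ρ (tt n k) (tt n 0) else 0))
      + ∑ l ∈ Finset.range (NN n),
        (if tt n l < X2 ω then ρ (tt n 0) (tt n (l+1)) - ρ (tt n 0) (tt n l) else 0)) μ :=
    I01.add I2
  rw [integral_add I012 I3,
    integral_add I01 I2,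
    integral_add (integrable_const (ρ (tt n 0) (tt n 0))) I1,
    integral_const, integral_finset_sum _ (fun k _ => i1 k),
    integral_finset_sum _ (fun l _ => i2 l),
    integral_finset_sum _ (fun k _ => integrable_finset_sum _ (fun l _ => i3 k l))]
  simp only [Measure.real, measure_univ, ENNReal.toReal_one, one_smul, smul_eq_mul, one_mul]
  congr 1
  · congr 1
    · congr 1
      exact Finset.sum_congr rfl (fun k _ =>
        integral_ite (μ := μ) (measurableSet_lt measurable_const hX1) _)
    · exact Finset.sum_congr rfl (fun l _ =>
        integral_ite (μ := μ) (measurableSet_lt measurable_const hX2) _)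
  · refine Finset.sum_congr rfl (fun k _ => ?_)
    rw [integral_finset_sum _ (fun l _ => i3 k l)]
    exact Finset.sum_congr rfl (fun l _ =>
      integral_ite (μ := μ) (meas_and hX1 hX2 _ _) _)
end

section DL
lemma discrete_le (μ : Measure Ω) [IsProbabilityMeasure μ] (ρ : ℝ → ℝ → ℝ)
    (hρ : ∀ a a' b b', a ≤ a' → b ≤ b' → ρ a' b + ρ a b' ≤ ρ a b + ρ a' b')
    {X1 X2 Y1 Y2 : Ω → ℝ}
    (hX1 : Measurable X1) (hX2 : Measurable X2) (hY1 : Measurable Y1) (hY2 : Measurable Y2)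
    (h1 : ∀ s, μ {ω | s < X1 ω} = μ {ω | s < Y1 ω})
    (h2 : ∀ s, μ {ω | s < X2 ω} = μ {ω | s < Y2 ω})
    (h12 : ∀ s r, μ {ω | s < X1 ω ∧ r < X2 ω} ≤ μ {ω | s < Y1 ω ∧ r < Y2 ω}) (n : ℕ) :
    ∫ ω, ρ (gg n (X1 ω)) (gg n (X2 ω)) ∂μ ≤ ∫ ω, ρ (gg n (Y1 ω)) (gg n (Y2 ω)) ∂μ := by
  rw [integral_approx μ ρ n hX1 hX2, integral_approx μ ρ n hY1 hY2]
  refine add_le_add (add_le_add (add_le_add le_rfl (le_of_eq ?_)) (le_of_eq ?_)) ?_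
  · exact Finset.sum_congr rfl (fun k _ => by rw [h1])
  · exact Finset.sum_congr rfl (fun l _ => by rw [h2])
  · refine Finset.sum_le_sum (fun k _ => Finset.sum_le_sum (fun l _ => ?_))
    have hΔ : 0 ≤ ρ (tt n (k+1)) (tt n (l+1)) - ρ (tt n (k+1)) (tt n l)
        - ρ (tt n k) (tt n (l+1)) + ρ (tt n k) (tt n l) := by
      have := hρ (tt n k) (tt n (k+1)) (tt n l) (tt n (l+1))
        (tt_mono n (Nat.le_succ k)) (tt_mono n (Nat.le_succ l))
      linarith
    exact mul_le_mul_of_nonneg_right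
      (ENNReal.toReal_mono (measure_ne_top μ _) (h12 _ _)) hΔ

end DL

section Eexp
variable {Ω : Type*} [MeasurableSpace Ω] {μ : Measure Ω}

lemma coe_ennreal_eexp {p : ENNReal} (hp : p ≠ ⊤) : (p : EReal) = ((p.toReal : ℝ) : EReal) := by
  conv_lhs => rw [← ENNReal.ofReal_toReal hp]
  rw [EReal.coe_ennreal_ofReal, max_eq_left ENNReal.toReal_nonneg]

lemma posPartInt_ne_top {f : Ω → ℝ} (hf : Integrable f μ) : posPartInt μ f ≠ ⊤ := by
  have hle : posPartInt μ f ≤ ∫⁻ ω, (‖f ω‖₊ : ENNReal) ∂μ := by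
    refine lintegral_mono fun ω => ?_
    rw [← enorm_eq_nnnorm, Real.enorm_eq_ofReal_abs]
    exact ENNReal.ofReal_le_ofReal (le_abs_self _)
  exact ne_top_of_le_ne_top hf.2.ne hle

lemma eexp_eq_integral {f : Ω → ℝ} (hf : Integrable f μ) :
    eexp μ f = ((∫ ω, f ω ∂μ : ℝ) : EReal) := by
  have hp := posPartInt_ne_top hf
  have hq := posPartInt_ne_top hf.neg
  have hq' : posPartInt μ (fun ω => -f ω) ≠ ⊤ := hq
  rw [eexp, coe_ennreal_eexp hp, coe_ennreal_eexp hq', ← EReal.coe_sub,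
    integral_eq_lintegral_pos_part_sub_lintegral_neg_part hf]
  rfl

lemma eexp_le_eexp {f g : Ω → ℝ} (hf : Integrable f μ) (hg : Integrable g μ)
    (h : ∫ ω, f ω ∂μ ≤ ∫ ω, g ω ∂μ) : eexp μ f ≤ eexp μ g := by
  rw [eexp_eq_integral hf, eexp_eq_integral hg]
  exact_mod_cast h

lemma eexp_indicator {Q : Ω → Prop} [∀ ω, Decidable (Q ω)] (hQ : MeasurableSet {ω | Q ω}) :
    eexp μ (fun ω => if Q ω then (1:ℝ) else 0) = (μ {ω | Q ω} : EReal) := by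
  have h1 : posPartInt μ (fun ω => if Q ω then (1:ℝ) else 0) = μ {ω | Q ω} := by
    rw [posPartInt]
    have : (fun ω => ENNReal.ofReal (if Q ω then (1:ℝ) else 0))
        = Set.indicator {ω | Q ω} (fun _ => (1 : ENNReal)) := by
      funext ω
      by_cases h : Q ω <;> simp [h, Set.indicator_apply]
    rw [this, lintegral_indicator hQ]
    simp
  have h2 : posPartInt μ (fun ω => -(if Q ω then (1:ℝ) else 0)) = 0 := by
    rw [posPartInt]
    have : ∀ ω, ENNReal.ofReal (-(if Q ω then (1:ℝ) else 0)) = 0 := by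
      intro ω; by_cases h : Q ω <;> simp [h]
    simp only [this, lintegral_zero]
  rw [eexp, h1, h2]
  simp [EReal.coe_ennreal_zero, sub_zero]

end Eexp

section Marg
variable {Ω : Type*} [MeasurableSpace Ω] {μ : Measure Ω} [IsProbabilityMeasure μ]
variable {U V : Fin 2 → Ω → ℝ}

lemma conc_surv (hc : ConcOrd μ U V) (s r : ℝ) :
    μ {ω | s < U 0 ω ∧ r < U 1 ω} ≤ μ {ω | s < V 0 ω ∧ r < V 1 ω} := by
  have := hc.2 ![s, r]
  simpa [Fin.forall_fin_two] using this

lemma conc_cdf (hc : ConcOrd μ U V) (s r : ℝ) :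
    μ {ω | U 0 ω ≤ s ∧ U 1 ω ≤ r} ≤ μ {ω | V 0 ω ≤ s ∧ V 1 ω ≤ r} := by
  have := hc.1 ![s, r]
  simpa [Fin.forall_fin_two] using this

lemma marg_surv_le (hc : ConcOrd μ U V) (s : ℝ) :
    μ {ω | s < U 0 ω} ≤ μ {ω | s < V 0 ω} := by
  have hU : {ω | s < U 0 ω} = ⋃ m : ℕ, {ω | s < U 0 ω ∧ -(m:ℝ) < U 1 ω} := by
    ext ω
    simp only [Set.mem_iUnion, Set.mem_setOf_eq]
    constructor
    · intro h
      obtain ⟨m, hm⟩ := exists_nat_gt (-(U 1 ω))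
      exact ⟨m, h, by linarith⟩
    · rintro ⟨m, hm, -⟩; exact hm
  have hmono : Monotone (fun m : ℕ => {ω | s < U 0 ω ∧ -(m:ℝ) < U 1 ω}) := by
    intro m m' hmm ω ⟨h1, h2⟩
    refine ⟨h1, lt_of_le_of_lt ?_ h2⟩
    simp only [neg_le_neg_iff]
    exact_mod_cast hmm
  rw [hU, hmono.measure_iUnion]
  exact iSup_le fun m => le_trans (conc_surv hc s (-(m:ℝ)))
    (measure_mono fun ω h => h.1)

lemma marg_cdf_le (hc : ConcOrd μ U V) (s : ℝ) :
    μ {ω | U 0 ω ≤ s} ≤ μ {ω | V 0 ω ≤ s} := by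
  have hU : {ω | U 0 ω ≤ s} = ⋃ m : ℕ, {ω | U 0 ω ≤ s ∧ U 1 ω ≤ (m:ℝ)} := by
    ext ω
    simp only [Set.mem_iUnion, Set.mem_setOf_eq]
    constructor
    · intro h
      obtain ⟨m, hm⟩ := exists_nat_gt (U 1 ω)
      exact ⟨m, h, hm.le⟩
    · rintro ⟨m, hm, -⟩; exact hm
  have hmono : Monotone (fun m : ℕ => {ω | U 0 ω ≤ s ∧ U 1 ω ≤ (m:ℝ)}) := by
    intro m m' hmm ω ⟨h1, h2⟩
    exact ⟨h1, le_trans h2 (by exact_mod_cast hmm)⟩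
  rw [hU, hmono.measure_iUnion]
  exact iSup_le fun m => le_trans (conc_cdf hc s (m:ℝ))
    (measure_mono fun ω h => h.1)

lemma marg_eq (hc : ConcOrd μ U V) (hU0 : Measurable (U 0)) (hV0 : Measurable (V 0)) (s : ℝ) :
    μ {ω | s < U 0 ω} = μ {ω | s < V 0 ω} := by
  refine le_antisymm (marg_surv_le hc s) ?_
  have hcompl : ∀ W : Ω → ℝ, {ω | s < W ω} = {ω | W ω ≤ s}ᶜ := by
    intro W; ext ω; simp [not_le]
  rw [hcompl (U 0), hcompl (V 0),
    measure_compl (measurableSet_le hU0 measurable_const) (measure_ne_top μ _),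
    measure_compl (measurableSet_le hV0 measurable_const) (measure_ne_top μ _)]
  exact tsub_le_tsub_left (marg_cdf_le hc s) _


lemma marg_surv_le' (hc : ConcOrd μ U V) (s : ℝ) :
    μ {ω | s < U 1 ω} ≤ μ {ω | s < V 1 ω} := by
  have hU : {ω | s < U 1 ω} = ⋃ m : ℕ, {ω | -(m:ℝ) < U 0 ω ∧ s < U 1 ω} := by
    ext ω
    simp only [Set.mem_iUnion, Set.mem_setOf_eq]
    constructor
    · intro h
      obtain ⟨m, hm⟩ := exists_nat_gt (-(U 0 ω))
      exact ⟨m, by linarith, h⟩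
    · rintro ⟨m, -, hm⟩; exact hm
  have hmono : Monotone (fun m : ℕ => {ω | -(m:ℝ) < U 0 ω ∧ s < U 1 ω}) := by
    intro m m' hmm ω ⟨h1, h2⟩
    refine ⟨lt_of_le_of_lt ?_ h1, h2⟩
    simp only [neg_le_neg_iff]
    exact_mod_cast hmm
  rw [hU, hmono.measure_iUnion]
  exact iSup_le fun m => le_trans (conc_surv hc (-(m:ℝ)) s)
    (measure_mono fun ω h => h.2)

lemma marg_cdf_le' (hc : ConcOrd μ U V) (s : ℝ) :
    μ {ω | U 1 ω ≤ s} ≤ μ {ω | V 1 ω ≤ s} := by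
  have hU : {ω | U 1 ω ≤ s} = ⋃ m : ℕ, {ω | U 0 ω ≤ (m:ℝ) ∧ U 1 ω ≤ s} := by
    ext ω
    simp only [Set.mem_iUnion, Set.mem_setOf_eq]
    constructor
    · intro h
      obtain ⟨m, hm⟩ := exists_nat_gt (U 0 ω)
      exact ⟨m, hm.le, h⟩
    · rintro ⟨m, -, hm⟩; exact hm
  have hmono : Monotone (fun m : ℕ => {ω | U 0 ω ≤ (m:ℝ) ∧ U 1 ω ≤ s}) := by
    intro m m' hmm ω ⟨h1, h2⟩
    exact ⟨le_trans h1 (by exact_mod_cast hmm), h2⟩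
  rw [hU, hmono.measure_iUnion]
  exact iSup_le fun m => le_trans (conc_cdf hc (m:ℝ) s)
    (measure_mono fun ω h => h.2)

lemma marg_eq' (hc : ConcOrd μ U V) (hU1 : Measurable (U 1)) (hV1 : Measurable (V 1)) (s : ℝ) :
    μ {ω | s < U 1 ω} = μ {ω | s < V 1 ω} := by
  refine le_antisymm (marg_surv_le' hc s) ?_
  have hcompl : ∀ W : Ω → ℝ, {ω | s < W ω} = {ω | W ω ≤ s}ᶜ := by
    intro W; ext ω; simp [not_le]
  rw [hcompl (U 1), hcompl (V 1),
    measure_compl (measurableSet_le hU1 measurable_const) (measure_ne_top μ _),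
    measure_compl (measurableSet_le hV1 measurable_const) (measure_ne_top μ _)]
  exact tsub_le_tsub_left (marg_cdf_le' hc s) _

end Marg
end Helpers

section Indicators
open Filter Topology

lemma supermodular_lower (y : Fin 2 → ℝ) :
    Supermodular (fun u : Fin 2 → ℝ => if ∀ i, u i < y i then (1:ℝ) else 0) := by
  intro u v
  have h01 : ∀ w : Fin 2 → ℝ, (0:ℝ) ≤ (if ∀ i, w i < y i then (1:ℝ) else 0) := by
    intro w; split <;> norm_num
  by_cases hu : ∀ i, u i < y i <;> by_cases hv : ∀ i, v i < y i
  · have hinf : ∀ i, (u ⊓ v) i < y i := fun i => lt_of_le_of_lt inf_le_left (hu i)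
    have hsup : ∀ i, (u ⊔ v) i < y i := fun i => sup_lt_iff.2 ⟨hu i, hv i⟩
    simp [hu, hv, hinf, hsup]
  · have hinf : ∀ i, (u ⊓ v) i < y i := fun i => lt_of_le_of_lt inf_le_left (hu i)
    simp only [hu, hv, if_true, if_false]
    have := h01 (u ⊔ v)
    simp only [hinf, if_true]
    linarith
  · have hinf : ∀ i, (u ⊓ v) i < y i := fun i => lt_of_le_of_lt inf_le_right (hv i)
    simp only [hu, hv, if_true, if_false]
    have := h01 (u ⊔ v)
    simp only [hinf, if_true]
    linarith
  · simp only [hu, hv, if_false]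
    have := h01 (u ⊓ v); have := h01 (u ⊔ v)
    linarith

lemma supermodular_upper (y : Fin 2 → ℝ) :
    Supermodular (fun u : Fin 2 → ℝ => if ∀ i, y i ≤ u i then (1:ℝ) else 0) := by
  intro u v
  have h01 : ∀ w : Fin 2 → ℝ, (0:ℝ) ≤ (if ∀ i, y i ≤ w i then (1:ℝ) else 0) := by
    intro w; split <;> norm_num
  by_cases hu : ∀ i, y i ≤ u i <;> by_cases hv : ∀ i, y i ≤ v i
  · have hsup : ∀ i, y i ≤ (u ⊔ v) i := fun i => le_trans (hu i) le_sup_left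
    have hinf : ∀ i, y i ≤ (u ⊓ v) i := fun i => le_inf (hu i) (hv i)
    simp [hu, hv, hinf, hsup]
  · have hsup : ∀ i, y i ≤ (u ⊔ v) i := fun i => le_trans (hu i) le_sup_left
    simp only [hu, hv, if_true, if_false]
    have := h01 (u ⊓ v)
    simp only [hsup, if_true]
    linarith
  · have hsup : ∀ i, y i ≤ (u ⊔ v) i := fun i => le_trans (hv i) le_sup_right
    simp only [hu, hv, if_true, if_false]
    have := h01 (u ⊓ v)
    simp only [hsup, if_true]
    linarith
  · simp only [hu, hv, if_false]
    have := h01 (u ⊓ v); have := h01 (u ⊔ v)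
    linarith

lemma rc_lower (y x : Fin 2 → ℝ) :
    ContinuousWithinAt (fun u : Fin 2 → ℝ => if ∀ i, u i < y i then (1:ℝ) else 0)
      (Set.Ici x) x := by
  by_cases hx : ∀ i, x i < y i
  · have hopen : IsOpen {u : Fin 2 → ℝ | ∀ i, u i < y i} := by
      have he : {u : Fin 2 → ℝ | ∀ i, u i < y i} = ⋂ i, {u | u i < y i} := by
        ext u; simp
      rw [he]
      exact isOpen_iInter_of_finite fun i => isOpen_lt (continuous_apply i) continuous_const
    refine (continuousWithinAt_const (b := (1:ℝ))).congr_of_eventuallyEq ?_ ?_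
    · filter_upwards [nhdsWithin_le_nhds (hopen.mem_nhds hx)] with u hu
      simp [hu]
    · simp [hx]
  · push_neg at hx
    obtain ⟨i, hi⟩ := hx
    refine (continuousWithinAt_const (b := (0:ℝ))).congr_of_eventuallyEq ?_ ?_
    · filter_upwards [self_mem_nhdsWithin] with u hu
      have hne : ¬ ∀ j, u j < y j := fun h => absurd (h i) (not_lt.2 (le_trans hi (hu i)))
      simp [hne]
    · have hne : ¬ ∀ j, x j < y j := fun h => absurd (h i) (not_lt.2 hi)
      simp [hne]

lemma rc_upper (y x : Fin 2 → ℝ) :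
    ContinuousWithinAt (fun u : Fin 2 → ℝ => if ∀ i, y i ≤ u i then (1:ℝ) else 0)
      (Set.Ici x) x := by
  by_cases hx : ∀ i, y i ≤ x i
  · refine (continuousWithinAt_const (b := (1:ℝ))).congr_of_eventuallyEq ?_ ?_
    · filter_upwards [self_mem_nhdsWithin] with u hu
      have h : ∀ j, y j ≤ u j := fun j => le_trans (hx j) (hu j)
      simp [h]
    · simp [hx]
  · push_neg at hx
    obtain ⟨i, hi⟩ := hx
    have hopen : IsOpen {u : Fin 2 → ℝ | u i < y i} :=
      isOpen_lt (continuous_apply i) continuous_const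
    refine (continuousWithinAt_const (b := (0:ℝ))).congr_of_eventuallyEq ?_ ?_
    · filter_upwards [nhdsWithin_le_nhds (hopen.mem_nhds hi)] with u hu
      have hne : ¬ ∀ j, y j ≤ u j := fun h => absurd (h i) (not_le.2 hu)
      simp [hne]
    · have hne : ¬ ∀ j, y j ≤ x j := fun h => absurd (h i) (not_le.2 hi)
      simp [hne]

end Indicators


/-- On pairs of random variables, the concordance order and the ⋄supermodular order
coincide. -/
theorem concOrd_iff_smDiamondOrd_two
    {Ω : Type*} [MeasurableSpace Ω] (μ : Measure Ω) [IsProbabilityMeasure μ]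
    (hμ : Atomless μ) (U V : Fin 2 → Ω → ℝ)
    (hU : ∀ i, Measurable (U i)) (hV : ∀ i, Measurable (V i)) :
    ConcOrd μ U V ↔ SmDiamondOrd μ U V := by
  have hmlt : ∀ (W : Fin 2 → Ω → ℝ), (∀ i, Measurable (W i)) → ∀ (c : Fin 2 → ℝ),
      MeasurableSet {ω | ∀ i, W i ω < c i} := by
    intro W hW c
    have he : {ω | ∀ i, W i ω < c i} = {ω | W 0 ω < c 0} ∩ {ω | W 1 ω < c 1} := by
      ext ω; simp [Fin.forall_fin_two]
    rw [he]
    exact (measurableSet_lt (hW 0) measurable_const).inter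
      (measurableSet_lt (hW 1) measurable_const)
  have hmge : ∀ (W : Fin 2 → Ω → ℝ), (∀ i, Measurable (W i)) → ∀ (c : Fin 2 → ℝ),
      MeasurableSet {ω | ∀ i, c i ≤ W i ω} := by
    intro W hW c
    have he : {ω | ∀ i, c i ≤ W i ω} = {ω | c 0 ≤ W 0 ω} ∩ {ω | c 1 ≤ W 1 ω} := by
      ext ω; simp [Fin.forall_fin_two]
    rw [he]
    exact (measurableSet_le measurable_const (hW 0)).inter
      (measurableSet_le measurable_const (hW 1))
  constructor
  · -- ConcOrd → SmDiamondOrd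
    intro hc φ hsm hbdd hrc
    obtain ⟨C, hC⟩ := hbdd
    set ρ : ℝ → ℝ → ℝ := fun a b => φ ![a, b] with hρdef
    have hρ : ∀ a a' b b', a ≤ a' → b ≤ b' → ρ a' b + ρ a b' ≤ ρ a b + ρ a' b' := by
      intro a a' b b' ha hb
      have h := hsm ![a', b] ![a, b']
      have hinf : ![a', b] ⊓ ![a, b'] = ![a, b] := by
        funext i
        fin_cases i <;>
          simp [Pi.inf_apply, inf_of_le_right ha, inf_of_le_left hb, min_eq_right ha, min_eq_left hb]
      have hsup : ![a', b] ⊔ ![a, b'] = ![a', b'] := by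
        funext i
        fin_cases i <;>
          simp [Pi.sup_apply, sup_of_le_left ha, sup_of_le_right hb, max_eq_left ha, max_eq_right hb]
      rw [hinf, hsup] at h
      simpa [hρdef] using h
    have hpairU : ∀ (n : ℕ) (ω : Ω), ![gg n (U 0 ω), gg n (U 1 ω)] = fun i => gg n (U i ω) := by
      intro n ω; funext i; fin_cases i <;> simp
    have hpairV : ∀ (n : ℕ) (ω : Ω), ![gg n (V 0 ω), gg n (V 1 ω)] = fun i => gg n (V i ω) := by
      intro n ω; funext i; fin_cases i <;> simp
    have htend : ∀ (W : Fin 2 → Ω → ℝ),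
        (∀ (n : ℕ) (ω : Ω), ![gg n (W 0 ω), gg n (W 1 ω)] = fun i => gg n (W i ω)) →
        ∀ ω : Ω, Filter.Tendsto (fun n => ρ (gg n (W 0 ω)) (gg n (W 1 ω)))
          Filter.atTop (nhds (φ (fun i => W i ω))) := by
      intro W hpair ω
      have hx := hrc (fun i => W i ω)
      have hseq : Filter.Tendsto (fun n => (fun i => gg n (W i ω))) Filter.atTop
          (nhdsWithin (fun i => W i ω) (Set.Ici (fun i => W i ω))) := by
        rw [tendsto_nhdsWithin_iff]
        constructor
        · rw [tendsto_pi_nhds]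
          intro i
          exact gg_tendsto (W i ω)
        · filter_upwards [gg_ge_eventually (W 0 ω), gg_ge_eventually (W 1 ω)] with n h0 h1
          intro i
          fin_cases i <;> assumption
      have h2 := Filter.Tendsto.comp hx hseq
      refine h2.congr fun n => ?_
      show φ (fun i => gg n (W i ω)) = ρ (gg n (W 0 ω)) (gg n (W 1 ω))
      rw [hρdef]
      exact congrArg φ (hpair n ω).symm
    have hintU : ∀ n, Integrable (fun ω => ρ (gg n (U 0 ω)) (gg n (U 1 ω))) μ :=
      fun n => integrable_approx μ ρ n (hU 0) (hU 1)
    have hintV : ∀ n, Integrable (fun ω => ρ (gg n (V 0 ω)) (gg n (V 1 ω))) μ :=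
      fun n => integrable_approx μ ρ n (hV 0) (hV 1)
    have hnorm : ∀ (a b : ℝ), ‖ρ a b‖ ≤ C := fun a b => by
      rw [Real.norm_eq_abs]; exact hC _
    have hasmU : AEStronglyMeasurable (fun ω => φ (fun i => U i ω)) μ :=
      aestronglyMeasurable_of_tendsto_ae Filter.atTop (fun n => (hintU n).1)
        (Filter.Eventually.of_forall (htend U hpairU))
    have hasmV : AEStronglyMeasurable (fun ω => φ (fun i => V i ω)) μ :=
      aestronglyMeasurable_of_tendsto_ae Filter.atTop (fun n => (hintV n).1)
        (Filter.Eventually.of_forall (htend V hpairV))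
    have hfUint : Integrable (fun ω => φ (fun i => U i ω)) μ :=
      ⟨hasmU, HasFiniteIntegral.of_bounded (C := C)
        (Filter.Eventually.of_forall fun ω => by rw [Real.norm_eq_abs]; exact hC _)⟩
    have hfVint : Integrable (fun ω => φ (fun i => V i ω)) μ :=
      ⟨hasmV, HasFiniteIntegral.of_bounded (C := C)
        (Filter.Eventually.of_forall fun ω => by rw [Real.norm_eq_abs]; exact hC _)⟩
    have hlimU : Filter.Tendsto (fun n => ∫ ω, ρ (gg n (U 0 ω)) (gg n (U 1 ω)) ∂μ)
        Filter.atTop (nhds (∫ ω, φ (fun i => U i ω) ∂μ)) :=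
      tendsto_integral_of_dominated_convergence (fun _ => C) (fun n => (hintU n).1)
        (integrable_const C)
        (fun n => Filter.Eventually.of_forall fun ω => hnorm _ _)
        (Filter.Eventually.of_forall (htend U hpairU))
    have hlimV : Filter.Tendsto (fun n => ∫ ω, ρ (gg n (V 0 ω)) (gg n (V 1 ω)) ∂μ)
        Filter.atTop (nhds (∫ ω, φ (fun i => V i ω) ∂μ)) :=
      tendsto_integral_of_dominated_convergence (fun _ => C) (fun n => (hintV n).1)
        (integrable_const C)
        (fun n => Filter.Eventually.of_forall fun ω => hnorm _ _)
        (Filter.Eventually.of_forall (htend V hpairV))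
    have hle : ∀ n, ∫ ω, ρ (gg n (U 0 ω)) (gg n (U 1 ω)) ∂μ
        ≤ ∫ ω, ρ (gg n (V 0 ω)) (gg n (V 1 ω)) ∂μ :=
      fun n => discrete_le μ ρ hρ (hU 0) (hU 1) (hV 0) (hV 1)
        (marg_eq hc (hU 0) (hV 0)) (marg_eq' hc (hU 1) (hV 1)) (conc_surv hc) n
    exact eexp_le_eexp hfUint hfVint (le_of_tendsto_of_tendsto' hlimU hlimV hle)
  · -- SmDiamondOrd → ConcOrd
    intro hs
    constructor
    · intro x
      have key : ∀ m : ℕ, μ {ω | ∀ i, U i ω ≤ x i}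
          ≤ μ {ω | ∀ i, V i ω < x i + 1/((m:ℝ)+1)} := by
        intro m
        set y : Fin 2 → ℝ := fun i => x i + 1/((m:ℝ)+1) with hy
        have h := hs (fun u => if ∀ i, u i < y i then (1:ℝ) else 0) (supermodular_lower y)
          ⟨1, fun u => by by_cases hh : ∀ i, u i < y i <;> simp [hh]⟩ (rc_lower y)
        have h' : (μ {ω | ∀ i, U i ω < y i} : EReal) ≤ (μ {ω | ∀ i, V i ω < y i} : EReal) := by
          rw [← eexp_indicator (μ := μ) (hmlt U hU y), ← eexp_indicator (μ := μ) (hmlt V hV y)]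
          exact h
        rw [EReal.coe_ennreal_le_coe_ennreal_iff] at h'
        refine le_trans (measure_mono ?_) h'
        intro ω hω i
        have hpos : (0:ℝ) < 1/((m:ℝ)+1) := by positivity
        have := hω i
        simp only [hy]
        linarith
      have hVx : μ {ω | ∀ i, V i ω ≤ x i}
          = ⨅ m : ℕ, μ {ω | ∀ i, V i ω < x i + 1/((m:ℝ)+1)} := by
        have hiI : {ω | ∀ i, V i ω ≤ x i}
            = ⋂ m : ℕ, {ω | ∀ i, V i ω < x i + 1/((m:ℝ)+1)} := by
          ext ω
          simp only [Set.mem_iInter, Set.mem_setOf_eq]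
          constructor
          · intro h m i
            have hpos : (0:ℝ) < 1/((m:ℝ)+1) := by positivity
            linarith [h i]
          · intro h i
            by_contra hlt
            push_neg at hlt
            obtain ⟨m, hm⟩ := exists_nat_one_div_lt (sub_pos.2 hlt)
            have := h m i
            linarith
        rw [hiI]
        refine Antitone.measure_iInter ?_
          (fun m => (hmlt V hV _).nullMeasurableSet) ⟨0, measure_ne_top μ _⟩
        intro m m' hmm ω hω i
        have hcast : (m:ℝ) + 1 ≤ (m':ℝ) + 1 := by
          have : (m:ℝ) ≤ m' := by exact_mod_cast hmm
          linarith
        have hdiv : 1/((m':ℝ)+1) ≤ 1/((m:ℝ)+1) :=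
          one_div_le_one_div_of_le (by positivity) hcast
        exact lt_of_lt_of_le (hω i) (by linarith)
      rw [hVx]
      exact le_iInf key
    · intro x
      have key : ∀ m : ℕ, μ {ω | ∀ i, x i + 1/((m:ℝ)+1) ≤ U i ω}
          ≤ μ {ω | ∀ i, x i < V i ω} := by
        intro m
        set y : Fin 2 → ℝ := fun i => x i + 1/((m:ℝ)+1) with hy
        have h := hs (fun u => if ∀ i, y i ≤ u i then (1:ℝ) else 0) (supermodular_upper y)
          ⟨1, fun u => by by_cases hh : ∀ i, y i ≤ u i <;> simp [hh]⟩ (rc_upper y)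
        have h' : (μ {ω | ∀ i, y i ≤ U i ω} : EReal) ≤ (μ {ω | ∀ i, y i ≤ V i ω} : EReal) := by
          rw [← eexp_indicator (μ := μ) (hmge U hU y), ← eexp_indicator (μ := μ) (hmge V hV y)]
          exact h
        rw [EReal.coe_ennreal_le_coe_ennreal_iff] at h'
        refine le_trans h' (measure_mono ?_)
        intro ω hω i
        have hpos : (0:ℝ) < 1/((m:ℝ)+1) := by positivity
        have := hω i
        simp only [hy] at this
        linarith
      have hUx : μ {ω | ∀ i, x i < U i ω}
          = ⨆ m : ℕ, μ {ω | ∀ i, x i + 1/((m:ℝ)+1) ≤ U i ω} := by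
        have hiU : {ω | ∀ i, x i < U i ω}
            = ⋃ m : ℕ, {ω | ∀ i, x i + 1/((m:ℝ)+1) ≤ U i ω} := by
          ext ω
          simp only [Set.mem_iUnion, Set.mem_setOf_eq]
          constructor
          · intro h
            have h0 : (0:ℝ) < min (U 0 ω - x 0) (U 1 ω - x 1) :=
              lt_min (sub_pos.2 (h 0)) (sub_pos.2 (h 1))
            obtain ⟨m, hm⟩ := exists_nat_one_div_lt h0
            refine ⟨m, fun i => ?_⟩
            have h1 : 1/((m:ℝ)+1) ≤ U i ω - x i := by
              fin_cases i
              · exact le_trans hm.le (min_le_left _ _)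
              · exact le_trans hm.le (min_le_right _ _)
            linarith
          · rintro ⟨m, hm⟩ i
            have hpos : (0:ℝ) < 1/((m:ℝ)+1) := by positivity
            linarith [hm i]
        rw [hiU]
        refine Monotone.measure_iUnion ?_
        intro m m' hmm ω hω i
        have hcast : (m:ℝ) + 1 ≤ (m':ℝ) + 1 := by
          have : (m:ℝ) ≤ m' := by exact_mod_cast hmm
          linarith
        have hdiv : 1/((m':ℝ)+1) ≤ 1/((m:ℝ)+1) :=
          one_div_le_one_div_of_le (by positivity) hcast
        linarith [hω i]
      rw [hUx]
      exact iSup_le key
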